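/- Let x ≠ e be coordinates with |x| < L and |e| < L. (i) If cpl(x, e) < |x|, then δ_CPL(dropLast(x), e) < δ_CPL(x, e), where dropLast(x) is x with its last element removed. (ii) If cpl(x, e) = |x| (x is a proper prefix of e), then the child coordinate c = take(|x| + 1, e) satisfies δ_CPL(c, e) < δ_CPL(x, e). Hence the prefix-tree embedding is also greedy with respect to the common-prefix-length based distance δ_CPL. -/

import Mathlib

/-!
The correction term `1 / (|x| + |e| + 1)` lies in `(0, 1]`. Passing to the parent keeps the common
prefix with `e` (it lies inside `dropLast x`) and shortens `x`, so it enlarges the subtracted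
correction term; passing to the next node on the path to `e` raises `cpl` by one, which outweighs
any change of the correction term. When the neighbour is `e` itself its distance is `0`, below
`δ_CPL(x, e)`, which is positive since `cpl x e ≤ |x| < L`.
-/

def cpl {α : Type*} [DecidableEq α] : List α → List α → ℕ
  | a :: as, b :: bs => if a = b then cpl as bs + 1 else 0
  | _, _ => 0

def deltaCPL {α : Type*} [DecidableEq α] (L : ℕ) (x y : List α) : ℚ :=
  if x = y then 0
  else (L : ℚ) - cpl x y - 1 / ((x.length : ℚ) + y.length + 1)

section CommonPrefixLength

variable {α : Type*} [DecidableEq α]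

@[simp]
lemma cpl_nil_left (y : List α) : cpl [] y = 0 := by
  cases y <;> rfl

@[simp]
lemma cpl_nil_right (x : List α) : cpl x [] = 0 := by
  cases x <;> rfl

lemma cpl_cons_cons (a b : α) (x y : List α) :
    cpl (a :: x) (b :: y) = if a = b then cpl x y + 1 else 0 :=
  rfl

@[simp]
lemma cpl_cons_self (a : α) (x y : List α) : cpl (a :: x) (a :: y) = cpl x y + 1 := by
  simp [cpl_cons_cons]

lemma cpl_le_length_left : ∀ x y : List α, cpl x y ≤ x.length
  | [], _ => by simp
  | _ :: _, [] => by simp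
  | a :: x, b :: y => by
    rw [cpl_cons_cons]
    split_ifs
    · exact Nat.succ_le_succ (cpl_le_length_left x y)
    · exact Nat.zero_le _

@[simp]
lemma cpl_self : ∀ x : List α, cpl x x = x.length
  | [] => rfl
  | a :: x => by simp [cpl_self x]

lemma cpl_take_left : ∀ (n : ℕ) (x y : List α), cpl (x.take n) y = min n (cpl x y)
  | 0, _, _ => by simp
  | _ + 1, [], _ => by simp
  | _ + 1, _ :: _, [] => by simp
  | n + 1, a :: x, b :: y => by
    rw [List.take_succ_cons, cpl_cons_cons, cpl_cons_cons]
    split_ifs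
    · rw [cpl_take_left n x y, Nat.add_min_add_right]
    · simp

lemma cpl_dropLast {x y : List α} (h : cpl x y < x.length) : cpl x.dropLast y = cpl x y := by
  rw [List.dropLast_eq_take, cpl_take_left]
  omega

lemma isPrefix_of_cpl_eq_length : ∀ {x y : List α}, cpl x y = x.length → x <+: y
  | [], _, _ => List.nil_prefix
  | _ :: _, [], h => by simp at h
  | a :: x, b :: y, h => by
    rw [cpl_cons_cons] at h
    split_ifs at h with hab
    exact List.cons_prefix_cons.mpr ⟨hab, isPrefix_of_cpl_eq_length (by simpa using h)⟩

end CommonPrefixLength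

section Distance

variable {α : Type*} [DecidableEq α] (L : ℕ) {x y e : List α}

@[simp]
lemma deltaCPL_self (x : List α) : deltaCPL L x x = 0 :=
  if_pos rfl

lemma deltaCPL_of_ne (h : x ≠ y) :
    deltaCPL L x y = L - cpl x y - 1 / ((x.length : ℚ) + y.length + 1) :=
  if_neg h

lemma deltaCPL_pos (hne : x ≠ y) (hL : cpl x y < L) : 0 < deltaCPL L x y := by
  have hlen : 1 ≤ x.length + y.length := by
    by_contra! h0
    exact hne (by simp_all [List.length_eq_zero_iff])
  have hcorr : 1 / ((x.length : ℚ) + y.length + 1) < 1 := by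
    rw [div_lt_one (by positivity)]
    exact_mod_cast Nat.lt_succ_of_le hlen
  have hgap : (cpl x y : ℚ) + 1 ≤ L := by exact_mod_cast hL
  rw [deltaCPL_of_ne L hne]
  linarith

lemma deltaCPL_lt_of_cpl_lt (hy : y ≠ e) (hx : x ≠ e) (h : cpl x e < cpl y e) :
    deltaCPL L y e < deltaCPL L x e := by
  have hcorr_y : 0 < 1 / ((y.length : ℚ) + e.length + 1) := by positivity
  have hcorr_x : 1 / ((x.length : ℚ) + e.length + 1) ≤ 1 := by
    rw [div_le_one (by positivity)]
    linarith [(x.length.cast_nonneg : (0 : ℚ) ≤ x.length), (e.length.cast_nonneg : (0 : ℚ) ≤ e.length)]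
  have hgap : (cpl x e : ℚ) + 1 ≤ cpl y e := by exact_mod_cast h
  rw [deltaCPL_of_ne L hy, deltaCPL_of_ne L hx]
  linarith

lemma deltaCPL_lt_of_length_lt (hy : y ≠ e) (hx : x ≠ e) (h : cpl y e = cpl x e)
    (hlen : y.length < x.length) : deltaCPL L y e < deltaCPL L x e := by
  have hcorr : 1 / ((x.length : ℚ) + e.length + 1) < 1 / ((y.length : ℚ) + e.length + 1) :=
    one_div_lt_one_div_of_lt (by positivity) (by gcongr)
  rw [deltaCPL_of_ne L hy, deltaCPL_of_ne L hx, h]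
  linarith

end Distance

theorem prefix_tree_greedy_CPL_general {α : Type*} [DecidableEq α] (L : ℕ) (x e : List α)
    (hne : x ≠ e) (hx : x.length < L) :
    (cpl x e < x.length → deltaCPL L x.dropLast e < deltaCPL L x e) ∧
    (cpl x e = x.length → deltaCPL L (e.take (x.length + 1)) e < deltaCPL L x e) := by
  have hpos : 0 < deltaCPL L x e := deltaCPL_pos L hne ((cpl_le_length_left x e).trans_lt hx)
  refine ⟨fun hlt => ?_, fun heq => ?_⟩
  · by_cases hparent : x.dropLast = e
    · rwa [hparent, deltaCPL_self]
    · refine deltaCPL_lt_of_length_lt L hparent hne (cpl_dropLast hlt) ?_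
      rw [List.length_dropLast]
      omega
  · have hpre : x <+: e := isPrefix_of_cpl_eq_length heq
    have hshort : x.length < e.length :=
      hpre.length_le.lt_of_ne fun hlen => hne (hpre.eq_of_length hlen)
    by_cases hchild : e.take (x.length + 1) = e
    · rwa [hchild, deltaCPL_self]
    · refine deltaCPL_lt_of_cpl_lt L hchild hne ?_
      rw [cpl_take_left, cpl_self, heq]
      omega

/-- The prefix-tree embedding is greedy w.r.t. `δ_CPL`: for `x ≠ e` with `|x| < L` and
`|e| < L`, (i) if `cpl x e < |x|` the parent `dropLast x` is strictly closer to `e`,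
and (ii) if `cpl x e = |x|` the child `take (|x|+1) e` is strictly closer to `e`. -/
theorem prefix_tree_greedy_CPL {α : Type*} [DecidableEq α] (L : ℕ) (x e : List α)
    (hne : x ≠ e) (hx : x.length < L) (he : e.length < L) :
    (cpl x e < x.length → deltaCPL L x.dropLast e < deltaCPL L x e) ∧
    (cpl x e = x.length → deltaCPL L (e.take (x.length + 1)) e < deltaCPL L x e) :=
  prefix_tree_greedy_CPL_general L x e hne hx
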